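/- arXiv:2410.22453 — 6 statements merged into one kernel-verified Lean document; each statement's English description precedes it below -/
import Mathlib

section
/- Let m be a natural number with m ≥ 2, and let g : ℕ → ℝ be a function satisfying: (i) g(a) + g(b) + g(c) = 0 for all natural numbers a, b, c with a + b + c = m, and (ii) g(a) + g(m + 2 − a) = 0 for all natural numbers a with a ≤ m + 2. Then g(a) = 0 for every natural number a ≤ m + 2. -/
/-!
Combining the triple `(b, m - b, 0)` with the antisymmetry at `m - b` gives the recursion
`g (b + 2) = g b + g 0`, so `g` is determined on each parity class by `g 0` and `g 1`:
`g (2k) = (k + 1) g 0` and `g (2k + 1) = g 1 + k g 0`. Feeding these into the antisymmetry at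
`0` and `1` (for even `m`), or into the triples `(0, 0, m)` and `(1, 1, m - 2)` (for odd `m`),
leaves a `2 × 2` system in `g 0, g 1` with nonzero determinant.
-/

theorem apply_add_two_mul_of_apply_add_two {M : Type*} [AddCommMonoid M] {f : ℕ → M} {c : M}
    {N : ℕ} (hf : ∀ b, b + 2 ≤ N → f (b + 2) = f b + c) {b : ℕ} :
    ∀ k, b + 2 * k ≤ N → f (b + 2 * k) = f b + k • c
  | 0, _ => by simp
  | k + 1, hk => by
    rw [show b + 2 * (k + 1) = b + 2 * k + 2 by ring, hf _ (by omega),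
      apply_add_two_mul_of_apply_add_two hf k (by omega), succ_nsmul, add_assoc]

section HomogeneousSystem

variable {m : ℕ} {g : ℕ → ℝ}
  (h1 : ∀ a b c : ℕ, a + b + c = m → g a + g b + g c = 0)
  (h2 : ∀ a : ℕ, a ≤ m + 2 → g a + g (m + 2 - a) = 0)
include h1 h2

theorem apply_add_two_eq {b : ℕ} (hb : b ≤ m) : g (b + 2) = g b + g 0 := by
  have triple := h1 b (m - b) 0 (by omega)
  have antisymm := h2 (m - b) (by omega)
  rw [show m + 2 - (m - b) = b + 2 by omega] at antisymm
  linarith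

theorem apply_add_two_mul_eq {b k : ℕ} (hk : b + 2 * k ≤ m + 2) :
    g (b + 2 * k) = g b + k * g 0 := by
  rw [apply_add_two_mul_of_apply_add_two (fun b hb => apply_add_two_eq h1 h2 (by omega)) k hk,
    nsmul_eq_mul]

theorem apply_two_mul_eq {k : ℕ} (hk : 2 * k ≤ m + 2) : g (2 * k) = (k + 1) * g 0 := by
  rw [← zero_add (2 * k), apply_add_two_mul_eq h1 h2 (by omega)]
  ring

theorem apply_two_mul_add_one_eq {k : ℕ} (hk : 2 * k + 1 ≤ m + 2) :
    g (2 * k + 1) = g 1 + k * g 0 := by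
  rw [add_comm, apply_add_two_mul_eq h1 h2 (by omega)]

theorem apply_zero_eq_zero_and_apply_one_eq_zero (hm : 2 ≤ m) : g 0 = 0 ∧ g 1 = 0 := by
  obtain ⟨n, rfl | rfl⟩ := Nat.even_or_odd' m
  · have at_zero := h2 0 (by omega)
    have at_one := h2 1 (by omega)
    rw [show 2 * n + 2 - 0 = 2 * (n + 1) by omega, apply_two_mul_eq h1 h2 (by omega)] at at_zero
    rw [show 2 * n + 2 - 1 = 2 * n + 1 by omega,
      apply_two_mul_add_one_eq h1 h2 (by omega)] at at_one
    push_cast at at_zero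
    have hg0 : g 0 = 0 :=
      (mul_eq_zero.mp (show ((n : ℝ) + 3) * g 0 = 0 by linarith)).resolve_left (by positivity)
    exact ⟨hg0, by rw [hg0] at at_one; linarith⟩
  · obtain ⟨n, rfl⟩ : ∃ n', n = n' + 1 := ⟨n - 1, by omega⟩
    have zero_zero := h1 0 0 (2 * (n + 1) + 1) (by omega)
    have one_one := h1 1 1 (2 * n + 1) (by omega)
    rw [apply_two_mul_add_one_eq h1 h2 (by omega)] at zero_zero one_one
    push_cast at zero_zero
    have hg0 : g 0 = 0 :=
      (mul_eq_zero.mp (show (2 * (n : ℝ) + 9) * g 0 = 0 by linarith)).resolve_left (by positivity)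
    exact ⟨hg0, by rw [hg0] at zero_zero; linarith⟩

end HomogeneousSystem

theorem homogeneous_system_trivial (m : ℕ) (hm : 2 ≤ m) (g : ℕ → ℝ)
    (h1 : ∀ a b c : ℕ, a + b + c = m → g a + g b + g c = 0)
    (h2 : ∀ a : ℕ, a ≤ m + 2 → g a + g (m + 2 - a) = 0) :
    ∀ a : ℕ, a ≤ m + 2 → g a = 0 := by
  obtain ⟨hg0, hg1⟩ := apply_zero_eq_zero_and_apply_one_eq_zero h1 h2 hm
  intro a ha
  obtain ⟨k, rfl | rfl⟩ := Nat.even_or_odd' a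
  · rw [apply_two_mul_eq h1 h2 ha, hg0, mul_zero]
  · rw [apply_two_mul_add_one_eq h1 h2 ha, hg0, hg1, mul_zero, add_zero]
end

section
/- Let m be a natural number with m ≥ 2, and let g : ℕ → ℝ be a function satisfying: (i) g(a) + g(b) + g(c) = 0 for all natural numbers a, b, c with a + b + c = m, and (ii) g(a) + g(m + 2 − a) = 0 for all natural numbers a with a ≤ m + 2. Then 2·g(k) = (k + 2)·g(0) for every natural number k ≤ m. -/
theorem homogeneous_system_linear_growth (m : ℕ) (hm : 2 ≤ m) (g : ℕ → ℝ)
    (h1 : ∀ a b c : ℕ, a + b + c = m → g a + g b + g c = 0)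
    (h2 : ∀ a : ℕ, a ≤ m + 2 → g a + g (m + 2 - a) = 0) :
    ∀ k : ℕ, k ≤ m → 2 * g k = ((k : ℝ) + 2) * g 0 := by
  have step : ∀ k : ℕ, k + 1 ≤ m → g (k + 1) = g k + g 1 - g 0 := by
    intro k hk
    have e1 := h1 k 1 (m - 1 - k) (by omega)
    have e2 := h1 (k + 1) 0 (m - 1 - k) (by omega)
    linarith
  have hgm := h1 0 0 m (by omega)
  have hg2 : g 2 = 2 * g 0 := by
    have e := h2 m (by omega)
    have : m + 2 - m = 2 := by omega
    rw [this] at e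
    linarith
  have hg1 : 2 * g 1 = 3 * g 0 := by
    have s1 := step 0 (by omega)
    have s2 := step 1 (by omega)
    norm_num at s1 s2
    linarith
  intro k hk
  induction k with
  | zero => norm_num
  | succ n ih =>
    have hn : n ≤ m := by omega
    have := step n (by omega)
    have := ih hn
    push_cast
    linarith
end

section
/- For all natural numbers a, b, c with a + b + c ≥ 1, the type-I weight satisfies the triple-pancake identity W_ff(a+b+2, c) + W_ff(b+c+2, a) + W_ff(c+a+2, b) = W_ff(a+b, c) + W_ff(b+c, a) + W_ff(c+a, b). -/
/-- The type-I weight assigned to an intersection of two folds. -/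
noncomputable def Wff (n k : ℕ) : ℝ :=
  4 * ((n : ℝ) - (k : ℝ)) /
    (((n : ℝ) + (k : ℝ)) * ((n : ℝ) + (k : ℝ) + 2) * ((n : ℝ) + (k : ℝ) + 4))

/-!
All three weights on each side of the identity have the same total degree `n + k`, hence the
same denominator; so each side collapses to a single fraction whose numerator is the sum of the
differences `n - k`. With `s = a + b + c` this gives `4 s / (s (s+2) (s+4))` on the right and
`4 (s+6) / ((s+2) (s+4) (s+6))` on the left, and both equal `4 / ((s+2) (s+4))` once `s ≠ 0`.
-/

theorem Wff_of_add_eq {n k s : ℕ} (h : n + k = s) :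
    Wff n k = 4 * ((n : ℝ) - k) / ((s : ℝ) * (s + 2) * (s + 4)) := by
  rw [Wff, ← h, Nat.cast_add]

theorem Wff_add_Wff_add_Wff_of_add_eq {n₁ k₁ n₂ k₂ n₃ k₃ s : ℕ}
    (h₁ : n₁ + k₁ = s) (h₂ : n₂ + k₂ = s) (h₃ : n₃ + k₃ = s) :
    Wff n₁ k₁ + Wff n₂ k₂ + Wff n₃ k₃ =
      4 * (((n₁ : ℝ) - k₁) + ((n₂ : ℝ) - k₂) + ((n₃ : ℝ) - k₃)) /
        ((s : ℝ) * (s + 2) * (s + 4)) := by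
  rw [Wff_of_add_eq h₁, Wff_of_add_eq h₂, Wff_of_add_eq h₃]
  ring

theorem Wff_cyclic_sum (a b c : ℕ) :
    Wff (a + b) c + Wff (b + c) a + Wff (c + a) b =
      4 * ((a + b + c : ℕ) : ℝ) /
        (((a + b + c : ℕ) : ℝ) * ((a + b + c : ℕ) + 2) * ((a + b + c : ℕ) + 4)) := by
  rw [Wff_add_Wff_add_Wff_of_add_eq rfl (by ring) (by ring)]
  push_cast
  ring

theorem Wff_cyclic_sum_shift (a b c : ℕ) :
    Wff (a + b + 2) c + Wff (b + c + 2) a + Wff (c + a + 2) b =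
      4 * (((a + b + c : ℕ) : ℝ) + 6) /
        ((((a + b + c : ℕ) : ℝ) + 2) * ((a + b + c : ℕ) + 4) * ((a + b + c : ℕ) + 6)) := by
  rw [Wff_add_Wff_add_Wff_of_add_eq (s := a + b + c + 2) (by ring) (by ring) (by ring)]
  push_cast
  ring

theorem Wff_triple_pancake (a b c : ℕ) (h : 1 ≤ a + b + c) :
    Wff (a + b + 2) c + Wff (b + c + 2) a + Wff (c + a + 2) b =
      Wff (a + b) c + Wff (b + c) a + Wff (c + a) b := by
  have hs : ((a + b + c : ℕ) : ℝ) ≠ 0 := by exact_mod_cast (by omega : a + b + c ≠ 0)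
  rw [Wff_cyclic_sum_shift, Wff_cyclic_sum]
  field_simp
end

section
/- Let F : ℕ × ℕ → ℝ satisfy: (i) antisymmetry: F(n,k) = −F(k,n) for all n, k with n + k ≥ 1; (ii) the triple-pancake identity: F(a+b+2, c) + F(b+c+2, a) + F(c+a+2, b) = F(a+b, c) + F(b+c, a) + F(c+a, b) for all natural numbers a, b, c with a + b + c ≥ 1; and (iii) the base values F(1,0) = 4/15, F(2,0) = 1/6, F(3,0) = 4/35. Then F(n,k) = 4(n−k)/((n+k)(n+k+2)(n+k+4)) for all natural numbers n, k with n + k ≥ 1. -/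
/-!
Subtracting the explicit weight from `F` leaves a solution `G` of the homogeneous relations
vanishing at `(1,0)`, `(2,0)`, `(3,0)`; we show `G = 0` level by level in `n + k`. The triple
identity links level `m + 2` to level `m`, so once level `m` vanishes the values
`x j = G (m + 2 - j, j)` satisfy `x a + x b + x c = 0` whenever `a + b + c = m`. Hence
`x 0, …, x m` is an arithmetic progression, and the instance `(m, 0, 0)` together with the
antisymmetry `x 2 = -x m` forces it to be zero. Levels `1, 2, 3` are fixed by the base values.
-/

section Progression

variable {x : ℕ → ℝ} {m : ℕ}

theorem eq_add_mul_of_sum_three_eq_zero (hsum : ∀ a b c, a + b + c = m → x a + x b + x c = 0) :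
    ∀ j ≤ m, x j = x 0 + j * (x 1 - x 0) := by
  intro j hj
  induction j with
  | zero => simp
  | succ j ih =>
    have step : x (j + 1) - x j = x 1 - x 0 := by
      linear_combination hsum (j + 1) (m - j - 1) 0 (by omega) - hsum j (m - j - 1) 1 (by omega)
    push_cast
    linear_combination step + ih (by omega)

theorem eq_zero_of_sum_three_eq_zero_of_antisymm (hm : 2 ≤ m)
    (hsum : ∀ a b c, a + b + c = m → x a + x b + x c = 0)
    (hanti : ∀ i j, i + j = m + 2 → x i = -x j) :
    ∀ j ≤ m + 2, x j = 0 := by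
  have hap := eq_add_mul_of_sum_three_eq_zero hsum
  set d := x 1 - x 0
  have e₁ : 3 * x 0 + m * d = 0 := by
    linear_combination hsum m 0 0 (by omega) - hap m le_rfl
  have e₂ : 2 * x 0 + (m + 2) * d = 0 := by
    linear_combination hanti 2 m (by omega) - hap 2 hm - hap m le_rfl
  have hd : d = 0 := by
    have : ((m : ℝ) + 6) * d = 0 := by linear_combination 3 * e₂ - 2 * e₁
    exact (mul_eq_zero.mp this).resolve_left (by positivity)
  have h₀ : x 0 = 0 := by linear_combination e₁ / 3 - m / 3 * hd
  have hlow : ∀ j ≤ m, x j = 0 := fun j hj => by rw [hap j hj, hd, h₀]; ring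
  intro j hj
  rcases le_or_gt j m with hjm | hjm
  · exact hlow j hjm
  · rw [hanti j (m + 2 - j) (by omega), hlow _ (by omega), neg_zero]

end Progression

structure PancakeRelations (F : ℕ × ℕ → ℝ) : Prop where
  antisymm : ∀ n k : ℕ, 1 ≤ n + k → F (n, k) = -F (k, n)
  triple : ∀ a b c : ℕ, 1 ≤ a + b + c →
    F (a + b + 2, c) + F (b + c + 2, a) + F (c + a + 2, b) =
      F (a + b, c) + F (b + c, a) + F (c + a, b)

namespace PancakeRelations

variable {F G : ℕ × ℕ → ℝ}

theorem sub (hF : PancakeRelations F) (hG : PancakeRelations G) :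
    PancakeRelations (F - G) where
  antisymm n k h := by simp only [Pi.sub_apply, hF.antisymm n k h, hG.antisymm n k h]; ring
  triple a b c h := by
    simp only [Pi.sub_apply]
    linear_combination hF.triple a b c h - hG.triple a b c h

theorem eq_zero_of_swap (hF : PancakeRelations F) {n k : ℕ} (h : 1 ≤ n + k)
    (hswap : F (k, n) = 0) : F (n, k) = 0 := by
  rw [hF.antisymm n k h, hswap, neg_zero]

theorem eq_zero_of_add_eq_add_two (hF : PancakeRelations F) {m : ℕ} (hm : 2 ≤ m)
    (hlow : ∀ n k, n + k = m → F (n, k) = 0) : ∀ n k, n + k = m + 2 → F (n, k) = 0 := by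
  have hsum : ∀ a b c, a + b + c = m →
      F (m + 2 - a, a) + F (m + 2 - b, b) + F (m + 2 - c, c) = 0 := by
    intro a b c h
    have htriple := hF.triple a b c (by omega)
    rw [hlow (a + b) c (by omega), hlow (b + c) a (by omega), hlow (c + a) b (by omega),
      show a + b + 2 = m + 2 - c by omega, show b + c + 2 = m + 2 - a by omega,
      show c + a + 2 = m + 2 - b by omega] at htriple
    linear_combination htriple
  have hanti : ∀ i j, i + j = m + 2 → F (m + 2 - i, i) = -F (m + 2 - j, j) := by
    intro i j h
    rw [show m + 2 - i = j by omega, show m + 2 - j = i by omega]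
    exact hF.antisymm j i (by omega)
  intro n k h
  have := eq_zero_of_sum_three_eq_zero_of_antisymm (x := fun j => F (m + 2 - j, j)) hm hsum
    hanti k (by omega)
  rwa [show m + 2 - k = n by omega] at this

theorem eq_zero (hF : PancakeRelations F) (h₁ : F (1, 0) = 0) (h₂ : F (2, 0) = 0)
    (h₃ : F (3, 0) = 0) : ∀ n k, 1 ≤ n + k → F (n, k) = 0 := by
  suffices ∀ s, 1 ≤ s → ∀ n k, n + k = s → F (n, k) = 0 from fun n k h => this _ h n k rfl
  intro s
  induction s using Nat.strong_induction_on with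
  | _ s ih =>
  intro hs n k hnk
  match s, hs with
  | 1, _ =>
    obtain ⟨rfl, rfl⟩ | ⟨rfl, rfl⟩ : n = 1 ∧ k = 0 ∨ n = 0 ∧ k = 1 := by omega
    exacts [h₁, hF.eq_zero_of_swap le_rfl h₁]
  | 2, _ =>
    obtain ⟨rfl, rfl⟩ | ⟨rfl, rfl⟩ | ⟨rfl, rfl⟩ : n = 2 ∧ k = 0 ∨ n = 1 ∧ k = 1 ∨ n = 0 ∧ k = 2 :=
      by omega
    · exact h₂
    · linarith [hF.antisymm 1 1 (by norm_num)]
    · exact hF.eq_zero_of_swap (by norm_num) h₂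
  | 3, _ =>
    have h₂₁ : F (2, 1) = 0 := by
      have htriple := hF.triple 1 0 0 le_rfl
      simp only [Nat.reduceAdd, h₁, h₃, hF.eq_zero_of_swap le_rfl h₁] at htriple
      linear_combination htriple
    obtain ⟨rfl, rfl⟩ | ⟨rfl, rfl⟩ | ⟨rfl, rfl⟩ | ⟨rfl, rfl⟩ :
        n = 3 ∧ k = 0 ∨ n = 2 ∧ k = 1 ∨ n = 1 ∧ k = 2 ∨ n = 0 ∧ k = 3 := by omega
    · exact h₃
    · exact h₂₁
    · exact hF.eq_zero_of_swap (by norm_num) h₂₁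
    · exact hF.eq_zero_of_swap (by norm_num) h₃
  | m + 4, _ =>
    exact hF.eq_zero_of_add_eq_add_two (m := m + 2) (by omega)
      (ih (m + 2) (by omega) (by omega)) n k hnk

end PancakeRelations

noncomputable def typeIWeight (p : ℕ × ℕ) : ℝ :=
  4 * ((p.1 : ℝ) - p.2) / ((p.1 + p.2) * (p.1 + p.2 + 2) * (p.1 + p.2 + 4))

theorem typeIWeight_eq_of_add_eq {n k s : ℕ} (h : n + k = s) :
    typeIWeight (n, k) = 4 * ((n : ℝ) - k) / ((s : ℝ) * (s + 2) * (s + 4)) := by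
  rw [typeIWeight, ← h, Nat.cast_add]

theorem pancakeRelations_typeIWeight : PancakeRelations typeIWeight where
  antisymm n k _ := by simp only [typeIWeight]; ring
  triple a b c h := by
    rw [typeIWeight_eq_of_add_eq (show a + b + 2 + c = a + b + c + 2 by omega),
      typeIWeight_eq_of_add_eq (show b + c + 2 + a = a + b + c + 2 by omega),
      typeIWeight_eq_of_add_eq (show c + a + 2 + b = a + b + c + 2 by omega),
      typeIWeight_eq_of_add_eq rfl,
      typeIWeight_eq_of_add_eq (show b + c + a = a + b + c by omega),
      typeIWeight_eq_of_add_eq (show c + a + b = a + b + c by omega),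
      ← add_div, ← add_div, ← add_div, ← add_div,
      div_eq_div_iff (by positivity) (by positivity)]
    push_cast
    ring

theorem typeI_weight_uniqueness (F : ℕ × ℕ → ℝ)
    (hanti : ∀ n k : ℕ, 1 ≤ n + k → F (n, k) = - F (k, n))
    (htriple : ∀ a b c : ℕ, 1 ≤ a + b + c →
      F (a + b + 2, c) + F (b + c + 2, a) + F (c + a + 2, b) =
        F (a + b, c) + F (b + c, a) + F (c + a, b))
    (h10 : F (1, 0) = 4 / 15) (h20 : F (2, 0) = 1 / 6) (h30 : F (3, 0) = 4 / 35) :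
    ∀ n k : ℕ, 1 ≤ n + k →
      F (n, k) = 4 * ((n : ℝ) - (k : ℝ)) /
        (((n : ℝ) + (k : ℝ)) * ((n : ℝ) + (k : ℝ) + 2) * ((n : ℝ) + (k : ℝ) + 4)) := by
  intro n k h
  have hzero := ((PancakeRelations.mk hanti htriple).sub pancakeRelations_typeIWeight).eq_zero
    (by norm_num [h10, typeIWeight]) (by norm_num [h20, typeIWeight])
    (by norm_num [h30, typeIWeight]) n k h
  rwa [Pi.sub_apply, sub_eq_zero, typeIWeight] at hzero
end

section
/- Let h : ℕ → ℝ satisfy h(r+2) = h(r) − W_ff(r+1, 0) + W_ff(r, 1) for all natural numbers r, together with h(0) = 2/3 and h(1) = 1/4. Then h(r) = 2/((r+1)(r+3)) for all natural numbers r. -/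
theorem pleat_weight_uniqueness (h : ℕ → ℝ)
    (hrec : ∀ r : ℕ, h (r + 2) = h r - Wff (r + 1) 0 + Wff r 1)
    (h0 : h 0 = 2 / 3) (h1 : h 1 = 1 / 4) :
    ∀ r : ℕ, h r = 2 / (((r : ℝ) + 1) * ((r : ℝ) + 3)) := by
  intro r
  induction r using Nat.twoStepInduction with
  | zero => norm_num [h0]
  | one => norm_num [h1]
  | more n ih _ =>
    have hr := hrec n
    rw [ih] at hr
    rw [hr]
    simp only [Wff]
    push_cast
    have h1 : (n : ℝ) + 1 > 0 := by positivity
    have h3 : (n : ℝ) + 3 > 0 := by positivity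
    have h5 : (n : ℝ) + 5 > 0 := by positivity
    field_simp
    ring
end

section
/- Let w : ℕ → ℝ satisfy w(n+1) = (1/2)·W_ff(n, 0) for all natural numbers n ≥ 1, together with w(0) = 2/3 and w(1) = 1/4. Then w(r) = 2/((r+1)(r+3)) for all natural numbers r. -/
theorem foldsheet_weight_uniqueness (w : ℕ → ℝ)
    (hrec : ∀ n : ℕ, 1 ≤ n → w (n + 1) = (1 / 2) * Wff n 0)
    (h0 : w 0 = 2 / 3) (h1 : w 1 = 1 / 4) :
    ∀ r : ℕ, w r = 2 / (((r : ℝ) + 1) * ((r : ℝ) + 3)) := by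
  intro r
  match r with
  | 0 => norm_num [h0]
  | 1 => norm_num [h1]
  | (n + 2) =>
    rw [hrec (n + 1) (by omega), Wff]
    have hn : (0:ℝ) < (n:ℝ) + 1 := by positivity
    push_cast
    field_simp
    ring
end
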